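/- Consider an LSS with D modes. Suppose there exist symmetric positive definite matrices Q_q ∈ ℝ^{n_q×n_q} and constants M, μ > 0 such that A_qᵀ Q_q + Q_q A_q + M Q_q ≺ 0 for all q and e^{−Mμ} K_{q1,q2}ᵀ Q_{q2} K_{q1,q2} ≺ Q_{q1} for all q1 ≠ q2. Let S_q be invertible matrices with Λ_q := (S_q^{−1})ᵀ Q_q S_q^{−1} diagonal, and let the reduced LSS Σ̂ with mode dimensions r_q ≤ n_q be obtained by transforming by S_q (Ā_q = S_q A_q S_q^{−1}, B̄_q = S_q B_q, C̄_q = C_q S_q^{−1}, K̄_{q1,q2} = S_{q2} K_{q1,q2} S_{q1}^{−1}) and keeping the leading r_q-blocks. Then the reduced LSS Σ̂ is uniformly exponentially stable with dwell time 2μ. -/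

import Mathlib

open Matrix MeasureTheory

/-- A linear switched system (LSS) with `D` modes: mode `q` has state dimension `n q`,
dynamics matrices `A q`, `B q`, output matrix `C q`, and `K q1 q2` is the coupling matrix
applied to the state when switching from mode `q1` to mode `q2`. -/
structure LSS (D m p : ℕ) where
  n : Fin D → ℕ
  A : (q : Fin D) → Matrix (Fin (n q)) (Fin (n q)) ℝ
  B : (q : Fin D) → Matrix (Fin (n q)) (Fin m) ℝ
  C : (q : Fin D) → Matrix (Fin p) (Fin (n q)) ℝ
  K : (q1 q2 : Fin D) → Matrix (Fin (n q2)) (Fin (n q1)) ℝ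

/-- A switching scenario: a sequence of modes `σ 0, σ 1, …` with `σ i ≠ σ (i+1)` and
strictly increasing switching times `0 = T 0 < T 1 < ⋯`; the `(i+1)`-st dwell time is
`T (i+1) - T i`. -/
structure SwitchingScenario (D : ℕ) where
  σ : ℕ → Fin D
  T : ℕ → ℝ
  hσ : ∀ i, σ i ≠ σ (i + 1)
  hT0 : T 0 = 0
  hTmono : StrictMono T

/-- `x i` is the piece of the trajectory on the interval `[T i, T (i+1)]` (the system is
in mode `σ i` there): it solves the mode-`σ i` linear ODE driven by `u` and satisfies the
jump conditions given by the coupling matrices. -/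
def IsTrajectory {D m p : ℕ} (sys : LSS D m p) (S : SwitchingScenario D)
    (u : ℝ → Fin m → ℝ) (x : (i : ℕ) → ℝ → Fin (sys.n (S.σ i)) → ℝ) : Prop :=
  (∀ i : ℕ, ∀ s ∈ Set.Icc (S.T i) (S.T (i + 1)),
      HasDerivAt (x i) ((sys.A (S.σ i)).mulVec (x i s) + (sys.B (S.σ i)).mulVec (u s)) s) ∧
  (∀ i : ℕ, x (i + 1) (S.T (i + 1)) =
      (sys.K (S.σ i) (S.σ (i + 1))).mulVec (x i (S.T (i + 1))))

/-- `y` is the output of the trajectory `x`: `y t = C_{σ i} (x i t)` for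
`t ∈ (T i, T (i+1)]`. -/
def IsOutput {D m p : ℕ} (sys : LSS D m p) (S : SwitchingScenario D)
    (x : (i : ℕ) → ℝ → Fin (sys.n (S.σ i)) → ℝ) (y : ℝ → Fin p → ℝ) : Prop :=
  ∀ i : ℕ, ∀ s ∈ Set.Ioc (S.T i) (S.T (i + 1)), y s = (sys.C (S.σ i)).mulVec (x i s)

/-- The LSS is uniformly exponentially stable with dwell time `μ`: there exist constants
`K, M' > 0` such that every zero-input trajectory along a switching scenario whose dwell
times are all `≥ μ` satisfies `‖x(t)‖₂ ≤ K e^{−M't} ‖x(0)‖₂` for all `t ≥ 0`. -/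
def UnifExpStable {D m p : ℕ} (sys : LSS D m p) (μ : ℝ) : Prop :=
  ∃ Kc > (0:ℝ), ∃ M' > (0:ℝ),
    ∀ (S : SwitchingScenario D), (∀ i : ℕ, μ ≤ S.T (i + 1) - S.T i) →
      ∀ (x : (i : ℕ) → ℝ → Fin (sys.n (S.σ i)) → ℝ),
        IsTrajectory sys S (fun _ _ => 0) x →
        (Real.sqrt (∑ j, (x 0 0 j) ^ 2) ≤
            Kc * Real.exp (-(M' * 0)) * Real.sqrt (∑ j, (x 0 0 j) ^ 2)) ∧
        ∀ i : ℕ, ∀ t ∈ Set.Ioc (S.T i) (S.T (i + 1)),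
          Real.sqrt (∑ j, (x i t j) ^ 2) ≤
            Kc * Real.exp (-(M' * t)) * Real.sqrt (∑ j, (x 0 0 j) ^ 2)


/-!
In the coordinates `S_q x` the Lyapunov matrix of mode `q` becomes the diagonal matrix
`Λ_q = (S_q⁻¹)ᵀ Q_q S_q⁻¹`, and the two matrix inequalities are preserved. Because `Λ_q` is
diagonal, both survive truncation to the leading `r_q` coordinates: the Lyapunov inequality
restricts to a principal submatrix, and dropping the trailing coordinates after a jump only
decreases `xᵀ Λ_{q₂} x`. So the reduced system carries the multiple Lyapunov function
`V(x) = xᵀ Λ̂_q x`, with `Λ̂_q` the leading `r_q`-block of `Λ_q`, which decays like `e^{-Mt}`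
inside a mode and grows by at most `e^{Mμ}` at a switch; with dwell times `≥ 2μ` the growth is
absorbed and `V` decays like `e^{-Mt/2}`. Uniform bounds `α‖x‖² ≤ V(x) ≤ β‖x‖²` then give
decay of `‖x‖` at rate `M/4`.
-/

open Matrix

theorem Finite.exists_pos_forall_le {ι : Type*} [Finite ι] {f : ι → ℝ} (hf : ∀ i, 0 < f i) :
    ∃ r > 0, ∀ i, r ≤ f i := by
  cases isEmpty_or_nonempty ι
  · exact ⟨1, one_pos, isEmptyElim⟩
  · obtain ⟨i₀, hi₀⟩ := Finite.exists_min f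
    exact ⟨f i₀, hf i₀, hi₀⟩

namespace Matrix

variable {n k l r : Type*} [Fintype n]

theorem dotProduct_transpose_mul_mul_mulVec [Fintype k] {R : Type*} [CommSemiring R]
    (B : Matrix n k R) (A : Matrix n n R) (x y : k → R) :
    x ⬝ᵥ (Bᵀ * A * B) *ᵥ y = (B *ᵥ x) ⬝ᵥ A *ᵥ (B *ᵥ y) := by
  rw [← mulVec_mulVec, ← mulVec_mulVec, dotProduct_mulVec, vecMul_transpose]

theorem dotProduct_mulVec_le_of_posSemidef_sub {A B : Matrix n n ℝ} (h : (A - B).PosSemidef)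
    (x : n → ℝ) : x ⬝ᵥ B *ᵥ x ≤ x ⬝ᵥ A *ᵥ x := by
  have := h.dotProduct_mulVec_nonneg x
  rwa [star_trivial, sub_mulVec, dotProduct_sub, sub_nonneg] at this

theorem PosSemidef.transpose_mul_mul_same [Fintype k] {A : Matrix n n ℝ} (hA : A.PosSemidef)
    (B : Matrix n k ℝ) : (Bᵀ * A * B).PosSemidef := by
  simpa [conjTranspose_eq_transpose_of_trivial] using hA.conjTranspose_mul_mul_same B

theorem PosDef.transpose_mul_mul_same [Fintype k] {A : Matrix n n ℝ} (hA : A.PosDef)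
    {B : Matrix n k ℝ} (hB : Function.Injective B.mulVec) : (Bᵀ * A * B).PosDef := by
  simpa [conjTranspose_eq_transpose_of_trivial] using hA.conjTranspose_mul_mul_same hB

open scoped MatrixOrder in
theorem PosDef.exists_mul_dotProduct_le [DecidableEq n] {P : Matrix n n ℝ} (hP : P.PosDef) :
    ∃ a > 0, ∃ b, ∀ x : n → ℝ, a * (x ⬝ᵥ x) ≤ x ⬝ᵥ P *ᵥ x ∧ x ⬝ᵥ P *ᵥ x ≤ b * (x ⬝ᵥ x) := by
  have hspec := hP.1.spectrum_real_eq_range_eigenvalues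
  obtain ⟨a, ha, hle⟩ := Finite.exists_pos_forall_le hP.eigenvalues_pos
  obtain ⟨b, hb⟩ := (Set.finite_range hP.1.eigenvalues).bddAbove
  have hlow : algebraMap ℝ _ a ≤ P := algebraMap_le_of_le_spectrum (by
    rw [hspec]; rintro _ ⟨i, rfl⟩; exact hle i) hP.1
  have hup : P ≤ algebraMap ℝ _ b := le_algebraMap_of_spectrum_le (by
    rw [hspec]; rintro _ ⟨i, rfl⟩; exact hb ⟨i, rfl⟩) hP.1
  refine ⟨a, ha, b, fun x => ⟨?_, ?_⟩⟩
  · simpa [Algebra.algebraMap_eq_smul_one, smul_mulVec, dotProduct_smul] using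
      dotProduct_mulVec_le_of_posSemidef_sub hlow x
  · simpa [Algebra.algebraMap_eq_smul_one, smul_mulVec, dotProduct_smul] using
      dotProduct_mulVec_le_of_posSemidef_sub hup x

theorem IsDiag.lyapunov_submatrix [Fintype r] {R : Type*} [CommSemiring R] {Λ : Matrix n n R}
    (hΛ : Λ.IsDiag) {e : r → n} (he : Function.Injective e) (A : Matrix n n R) (c : R) :
    (A.submatrix e e)ᵀ * Λ.submatrix e e + Λ.submatrix e e * A.submatrix e e + c • Λ.submatrix e e
      = (Aᵀ * Λ + Λ * A + c • Λ).submatrix e e := by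
  classical
  rw [← hΛ.diagonal_diag, submatrix_diagonal _ _ he]
  ext i j
  simp [diagonal_mul, mul_diagonal, diagonal_apply, he.eq_iff]

theorem IsDiag.posSemidef_submatrix_sub [Fintype l] [Fintype r] {Λ : Matrix n n ℝ}
    (hΛ : Λ.IsDiag) (hΛ' : Λ.PosSemidef) {e : r → n} (he : Function.Injective e) (f : l → k)
    (K : Matrix n k ℝ) :
    ((Kᵀ * Λ * K).submatrix f f -
      (K.submatrix e f)ᵀ * Λ.submatrix e e * K.submatrix e f).PosSemidef := by
  classical
  have hX : (Kᵀ * Λ * K).submatrix f f = (K.submatrix id f)ᵀ * Λ * K.submatrix id f := rfl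
  rw [hX, show K.submatrix e f = (K.submatrix id f).submatrix e id from rfl]
  generalize K.submatrix id f = X
  refine .of_dotProduct_mulVec_nonneg ((hΛ'.transpose_mul_mul_same X).1.sub
    ((hΛ'.submatrix e).transpose_mul_mul_same _).1) fun x => ?_
  rw [star_trivial, sub_mulVec, dotProduct_sub, sub_nonneg, dotProduct_transpose_mul_mul_mulVec,
    dotProduct_transpose_mul_mul_mulVec, ← hΛ.diagonal_diag, submatrix_diagonal _ _ he]
  have hy : X.submatrix e id *ᵥ x = (X *ᵥ x) ∘ e := rfl
  set y := X *ᵥ x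
  simp only [hy, dotProduct, mulVec_diagonal, Function.comp_apply, diag_apply]
  refine (Finset.sum_map Finset.univ ⟨e, he⟩ fun i => y i * (Λ i i * y i)).symm.trans_le ?_
  exact Finset.sum_le_univ_sum_of_nonneg fun i => by
    rw [mul_left_comm]
    exact mul_nonneg hΛ'.diag_nonneg (mul_self_nonneg _)

theorem transpose_mul_add_mul_add_smul_eq_of_mul_eq_one [DecidableEq n] {R : Type*} [CommRing R]
    {S W : Matrix n n R} (hWS : W * S = 1) (A Q : Matrix n n R) (c : R) :
    (S * A * W)ᵀ * (Wᵀ * Q * W) + (Wᵀ * Q * W) * (S * A * W) + c • (Wᵀ * Q * W) =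
      Wᵀ * (Aᵀ * Q + Q * A + c • Q) * W := by
  have hSW : Sᵀ * Wᵀ = 1 := by rw [← transpose_mul, hWS, transpose_one]
  simp only [transpose_mul, Matrix.mul_add, Matrix.add_mul,
    Matrix.mul_smul, Matrix.smul_mul, Matrix.mul_assoc, ← Matrix.mul_assoc Sᵀ,
    ← Matrix.mul_assoc W S, hSW, hWS, Matrix.one_mul]

theorem transpose_mul_mul_eq_of_mul_eq_one [Fintype k] [DecidableEq n] {R : Type*} [CommRing R]
    {W₁ : Matrix k k R} {S₂ W₂ : Matrix n n R} (hWS : W₂ * S₂ = 1) (K : Matrix n k R)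
    (Q : Matrix n n R) :
    (S₂ * K * W₁)ᵀ * (W₂ᵀ * Q * W₂) * (S₂ * K * W₁) = W₁ᵀ * (Kᵀ * Q * K) * W₁ := by
  have hSW : S₂ᵀ * W₂ᵀ = 1 := by rw [← transpose_mul, hWS, transpose_one]
  simp only [transpose_mul, Matrix.mul_assoc, ← Matrix.mul_assoc S₂ᵀ,
    ← Matrix.mul_assoc W₂ S₂, hSW, hWS, Matrix.one_mul]

end Matrix

section Lyapunov

variable {n : Type*} [Fintype n]

theorem HasDerivAt.dotProduct_mulVec {x : ℝ → n → ℝ} {x' : n → ℝ} {t : ℝ}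
    (hx : HasDerivAt x x' t) (P : Matrix n n ℝ) :
    HasDerivAt (fun s => x s ⬝ᵥ P *ᵥ x s) (x' ⬝ᵥ P *ᵥ x t + x t ⬝ᵥ P *ᵥ x') t := by
  have hj := hasDerivAt_pi.1 hx
  have h : HasDerivAt (fun s => ∑ j, x s j * ∑ k, P j k * x s k)
      (∑ j, (x' j * ∑ k, P j k * x t k + x t j * ∑ k, P j k * x' k)) t :=
    HasDerivAt.fun_sum fun j _ =>
      (hj j).mul (HasDerivAt.fun_sum fun k _ => (hj k).const_mul (P j k))
  simpa [dotProduct, mulVec, Finset.sum_add_distrib] using h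

theorem dotProduct_mulVec_le_exp_mul_of_lyapunov {A P : Matrix n n ℝ} {M : ℝ}
    (hP : (-(Aᵀ * P + P * A + M • P)).PosSemidef) {x : ℝ → n → ℝ} {a b : ℝ} (hab : a ≤ b)
    (hx : ∀ s ∈ Set.Icc a b, HasDerivAt x (A *ᵥ x s) s) :
    x b ⬝ᵥ P *ᵥ x b ≤ Real.exp (-(M * (b - a))) * (x a ⬝ᵥ P *ᵥ x a) := by
  set V : ℝ → ℝ := fun s => x s ⬝ᵥ P *ᵥ x s
  have hV' : ∀ s, (A *ᵥ x s) ⬝ᵥ P *ᵥ x s + x s ⬝ᵥ P *ᵥ (A *ᵥ x s) ≤ -(M * V s) := by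
    intro s
    have h := dotProduct_mulVec_le_of_posSemidef_sub (by rwa [zero_sub]) (x s)
    simp only [add_mulVec, dotProduct_add, smul_mulVec, dotProduct_smul, smul_eq_mul,
      zero_mulVec, dotProduct_zero, ← mulVec_mulVec] at h
    rw [dotProduct_mulVec (x s) Aᵀ, vecMul_transpose] at h
    linarith
  have hg : ∀ s ∈ Set.Icc a b, HasDerivAt (fun s => Real.exp (M * s) * V s)
      (Real.exp (M * s) * M * V s + Real.exp (M * s) *
        ((A *ᵥ x s) ⬝ᵥ P *ᵥ x s + x s ⬝ᵥ P *ᵥ (A *ᵥ x s))) s := fun s hs =>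
    (((hasDerivAt_id s).const_mul M).exp.congr_deriv (by simp)).mul
      ((hx s hs).dotProduct_mulVec P)
  have hanti : AntitoneOn (fun s => Real.exp (M * s) * V s) (Set.Icc a b) := by
    refine antitoneOn_of_deriv_nonpos (convex_Icc a b)
      (fun s hs => (hg s hs).continuousAt.continuousWithinAt)
      (fun s hs => (hg s (interior_subset hs)).differentiableAt.differentiableWithinAt)
      fun s hs => ?_
    rw [(hg s (interior_subset hs)).deriv]
    nlinarith [hV' s, Real.exp_pos (M * s)]
  have hexp : Real.exp (-(M * (b - a))) * Real.exp (M * b) = Real.exp (M * a) := by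
    rw [← Real.exp_add]; ring_nf
  refine le_of_mul_le_mul_left ?_ (Real.exp_pos (M * b))
  calc Real.exp (M * b) * V b
      ≤ Real.exp (M * a) * V a := hanti (Set.left_mem_Icc.2 hab) (Set.right_mem_Icc.2 hab) hab
    _ = _ := by rw [← hexp]; ring

end Lyapunov

namespace LSS

variable {D m p : ℕ}

noncomputable def transform (sys : LSS D m p)
    (S : (q : Fin D) → Matrix (Fin (sys.n q)) (Fin (sys.n q)) ℝ) : LSS D m p where
  n := sys.n
  A q := S q * sys.A q * (S q)⁻¹
  B q := S q * sys.B q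
  C q := sys.C q * (S q)⁻¹
  K q1 q2 := S q2 * sys.K q1 q2 * (S q1)⁻¹

def truncate (sys : LSS D m p) (r : Fin D → ℕ) (hr : ∀ q, r q ≤ sys.n q) : LSS D m p where
  n := r
  A q := (sys.A q).submatrix (Fin.castLE (hr q)) (Fin.castLE (hr q))
  B q := (sys.B q).submatrix (Fin.castLE (hr q)) id
  C q := (sys.C q).submatrix id (Fin.castLE (hr q))
  K q1 q2 := (sys.K q1 q2).submatrix (Fin.castLE (hr q2)) (Fin.castLE (hr q1))

structure LyapunovCertificate (sys : LSS D m p) (M μ : ℝ)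
    (P : (q : Fin D) → Matrix (Fin (sys.n q)) (Fin (sys.n q)) ℝ) : Prop where
  posDef : ∀ q, (P q).PosDef
  lyapunov : ∀ q, (-((sys.A q)ᵀ * P q + P q * sys.A q + M • P q)).PosSemidef
  jump : ∀ q1 q2, q1 ≠ q2 →
    (P q1 - Real.exp (-(M * μ)) • ((sys.K q1 q2)ᵀ * P q2 * sys.K q1 q2)).PosSemidef

namespace LyapunovCertificate

variable {sys : LSS D m p} {M μ : ℝ}
  {P : (q : Fin D) → Matrix (Fin (sys.n q)) (Fin (sys.n q)) ℝ}

theorem transform (hc : sys.LyapunovCertificate M μ P)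
    {S : (q : Fin D) → Matrix (Fin (sys.n q)) (Fin (sys.n q)) ℝ} (hS : ∀ q, IsUnit (S q).det) :
    (sys.transform S).LyapunovCertificate M μ (fun q => ((S q)⁻¹)ᵀ * P q * (S q)⁻¹) where
  posDef q := (hc.posDef q).transpose_mul_mul_same
    (mulVec_injective_of_isUnit ((isUnit_iff_isUnit_det _).2 (isUnit_nonsing_inv_det _ (hS q))))
  lyapunov q := by
    have h := (hc.lyapunov q).transpose_mul_mul_same (S q)⁻¹
    rw [Matrix.mul_neg, Matrix.neg_mul,
      ← transpose_mul_add_mul_add_smul_eq_of_mul_eq_one (nonsing_inv_mul _ (hS q))] at h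
    exact h
  jump q1 q2 hne := by
    have h := (hc.jump q1 q2 hne).transpose_mul_mul_same (S q1)⁻¹
    rw [Matrix.mul_sub, Matrix.sub_mul, Matrix.mul_smul, Matrix.smul_mul,
      ← transpose_mul_mul_eq_of_mul_eq_one (S₂ := S q2) (nonsing_inv_mul _ (hS q2))] at h
    exact h

theorem truncate (hc : sys.LyapunovCertificate M μ P) (hP : ∀ q, (P q).IsDiag)
    (r : Fin D → ℕ) (hr : ∀ q, r q ≤ sys.n q) :
    (sys.truncate r hr).LyapunovCertificate M μ
      (fun q => (P q).submatrix (Fin.castLE (hr q)) (Fin.castLE (hr q))) where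
  posDef q := (hc.posDef q).submatrix (Fin.castLE_injective _)
  lyapunov q := by
    have h := (hc.lyapunov q).submatrix (Fin.castLE (hr q))
    rw [submatrix_neg, Pi.neg_apply, Pi.neg_apply,
      ← (hP q).lyapunov_submatrix (Fin.castLE_injective _)] at h
    exact h
  jump q1 q2 hne := by
    set e₁ := Fin.castLE (hr q1)
    set e₂ := Fin.castLE (hr q2)
    set K := sys.K q1 q2
    set c := Real.exp (-(M * μ))
    -- dropping the trailing coordinates after the jump only decreases `xᵀ P_{q₂} x`
    have hdrop := (hP q2).posSemidef_submatrix_sub (hc.posDef q2).posSemidef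
      (Fin.castLE_injective (hr q2)) e₁ K
    have hsplit : (P q1 - c • (Kᵀ * P q2 * K)).submatrix e₁ e₁ +
        c • ((Kᵀ * P q2 * K).submatrix e₁ e₁ -
          (K.submatrix e₂ e₁)ᵀ * (P q2).submatrix e₂ e₂ * K.submatrix e₂ e₁) =
        (P q1).submatrix e₁ e₁ - c • ((K.submatrix e₂ e₁)ᵀ * (P q2).submatrix e₂ e₂ *
          K.submatrix e₂ e₁) := by
      rw [smul_sub]
      change (P q1).submatrix e₁ e₁ - c • (Kᵀ * P q2 * K).submatrix e₁ e₁ + _ = _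
      abel
    have h := ((hc.jump q1 q2 hne).submatrix e₁).add (hdrop.smul (Real.exp_nonneg (-(M * μ))))
    rw [hsplit] at h
    exact h

section Trajectory

variable {S : SwitchingScenario D} {x : (i : ℕ) → ℝ → Fin (sys.n (S.σ i)) → ℝ}

theorem dotProduct_mulVec_nonneg (hc : sys.LyapunovCertificate M μ P) (q : Fin D)
    (v : Fin (sys.n q) → ℝ) : 0 ≤ v ⬝ᵥ P q *ᵥ v := by
  simpa using (hc.posDef q).posSemidef.dotProduct_mulVec_nonneg v

theorem trajectory_le_in_mode (hc : sys.LyapunovCertificate M μ P)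
    (hx : IsTrajectory sys S (fun _ _ => 0) x) {i : ℕ} {t : ℝ}
    (ht : t ∈ Set.Icc (S.T i) (S.T (i + 1))) :
    x i t ⬝ᵥ P (S.σ i) *ᵥ x i t ≤
      Real.exp (-(M * (t - S.T i))) * (x i (S.T i) ⬝ᵥ P (S.σ i) *ᵥ x i (S.T i)) :=
  dotProduct_mulVec_le_exp_mul_of_lyapunov (hc.lyapunov _) ht.1 fun s hs => by
    simpa only [show (fun _ : Fin m => (0 : ℝ)) = 0 from rfl, mulVec_zero, add_zero] using
      hx.1 i s ⟨hs.1, hs.2.trans ht.2⟩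

theorem trajectory_jump_le (hc : sys.LyapunovCertificate M μ P)
    (hx : IsTrajectory sys S (fun _ _ => 0) x) (i : ℕ) :
    x (i + 1) (S.T (i + 1)) ⬝ᵥ P (S.σ (i + 1)) *ᵥ x (i + 1) (S.T (i + 1)) ≤
      Real.exp (M * μ) * (x i (S.T (i + 1)) ⬝ᵥ P (S.σ i) *ᵥ x i (S.T (i + 1))) := by
  have h := dotProduct_mulVec_le_of_posSemidef_sub (hc.jump _ _ (S.hσ i)) (x i (S.T (i + 1)))
  rwa [smul_mulVec, dotProduct_smul, smul_eq_mul, dotProduct_transpose_mul_mul_mulVec,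
    ← hx.2 i, Real.exp_neg, inv_mul_le_iff₀ (Real.exp_pos _)] at h

theorem trajectory_le_at_switch (hc : sys.LyapunovCertificate M μ P) (hM : 0 ≤ M)
    (hdwell : ∀ i, 2 * μ ≤ S.T (i + 1) - S.T i) (hx : IsTrajectory sys S (fun _ _ => 0) x)
    (i : ℕ) :
    x i (S.T i) ⬝ᵥ P (S.σ i) *ᵥ x i (S.T i) ≤
      Real.exp (-(M / 2 * S.T i)) * (x 0 0 ⬝ᵥ P (S.σ 0) *ᵥ x 0 0) := by
  induction i with
  | zero => simp [S.hT0]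
  | succ i ih =>
    have hT := hdwell i
    have hTi : S.T i ≤ S.T (i + 1) := (S.hTmono (Nat.lt_succ_self i)).le
    calc _ ≤ Real.exp (M * μ) * (x i (S.T (i + 1)) ⬝ᵥ P (S.σ i) *ᵥ x i (S.T (i + 1))) :=
          hc.trajectory_jump_le hx i
      _ ≤ Real.exp (M * μ) * (Real.exp (-(M * (S.T (i + 1) - S.T i))) *
            (Real.exp (-(M / 2 * S.T i)) * (x 0 0 ⬝ᵥ P (S.σ 0) *ᵥ x 0 0))) := by
          gcongr
          exact (hc.trajectory_le_in_mode hx ⟨hTi, le_rfl⟩).trans (by gcongr)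
      _ = Real.exp (M * μ + -(M * (S.T (i + 1) - S.T i)) + -(M / 2 * S.T i)) *
            (x 0 0 ⬝ᵥ P (S.σ 0) *ᵥ x 0 0) := by
          rw [Real.exp_add, Real.exp_add]
          ring
      _ ≤ _ := by
          gcongr
          · exact hc.dotProduct_mulVec_nonneg _ _
          · nlinarith

theorem trajectory_le (hc : sys.LyapunovCertificate M μ P) (hM : 0 ≤ M)
    (hdwell : ∀ i, 2 * μ ≤ S.T (i + 1) - S.T i) (hx : IsTrajectory sys S (fun _ _ => 0) x)
    {i : ℕ} {t : ℝ} (ht : t ∈ Set.Icc (S.T i) (S.T (i + 1))) :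
    x i t ⬝ᵥ P (S.σ i) *ᵥ x i t ≤ Real.exp (-(M / 2 * t)) * (x 0 0 ⬝ᵥ P (S.σ 0) *ᵥ x 0 0) := by
  have hTi : 0 ≤ S.T i := S.hT0 ▸ S.hTmono.monotone (Nat.zero_le i)
  calc _ ≤ Real.exp (-(M * (t - S.T i))) *
        (Real.exp (-(M / 2 * S.T i)) * (x 0 0 ⬝ᵥ P (S.σ 0) *ᵥ x 0 0)) :=
        (hc.trajectory_le_in_mode hx ht).trans
          (by gcongr; exact hc.trajectory_le_at_switch hM hdwell hx i)
    _ = Real.exp (-(M * (t - S.T i)) + -(M / 2 * S.T i)) * (x 0 0 ⬝ᵥ P (S.σ 0) *ᵥ x 0 0) := by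
        rw [Real.exp_add]
        ring
    _ ≤ _ := by
        gcongr
        · exact hc.dotProduct_mulVec_nonneg _ _
        · nlinarith [ht.1]

end Trajectory

theorem unifExpStable (hc : sys.LyapunovCertificate M μ P) (hM : 0 < M) :
    UnifExpStable sys (2 * μ) := by
  classical
  choose a ha b hab using fun q => (hc.posDef q).exists_mul_dotProduct_le
  obtain ⟨α, hα, hαa⟩ := Finite.exists_pos_forall_le ha
  obtain ⟨β, hβ⟩ := (Set.finite_range b).bddAbove
  have hsq : ∀ {k : ℕ} (v : Fin k → ℝ), ∑ j, v j ^ 2 = v ⬝ᵥ v := fun v => by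
    simp [dotProduct, sq]
  set κ := Real.sqrt (max 1 (β / α))
  have hκ : 1 ≤ κ := Real.one_le_sqrt.2 (le_max_left _ _)
  refine ⟨κ, by positivity, M / 4, by positivity, fun S hdwell x hx => ⟨?_, fun i t ht => ?_⟩⟩
  · simp only [mul_zero, neg_zero, Real.exp_zero, mul_one]
    exact le_mul_of_one_le_left (Real.sqrt_nonneg _) hκ
  have h0 : 0 ≤ x 0 0 ⬝ᵥ x 0 0 := hsq (x 0 0) ▸ by positivity
  have hV := hc.trajectory_le hM.le hdwell hx ⟨ht.1.le, ht.2⟩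
  have hlow := (mul_le_mul_of_nonneg_right (hαa (S.σ i)) (hsq (x i t) ▸ by positivity)).trans
    (hab _ (x i t)).1
  have hup := (hab _ (x 0 0)).2.trans (mul_le_mul_of_nonneg_right (hβ ⟨S.σ 0, rfl⟩) h0)
  have hbound : x i t ⬝ᵥ x i t ≤ (κ * Real.exp (-(M / 4 * t))) ^ 2 * (x 0 0 ⬝ᵥ x 0 0) := by
    calc _ ≤ β / α * Real.exp (-(M / 2 * t)) * (x 0 0 ⬝ᵥ x 0 0) := by
          rw [div_mul_eq_mul_div, div_mul_eq_mul_div, le_div_iff₀ hα]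
          nlinarith [Real.exp_pos (-(M / 2 * t))]
      _ ≤ max 1 (β / α) * Real.exp (-(M / 2 * t)) * (x 0 0 ⬝ᵥ x 0 0) := by
          gcongr
          exact le_max_right _ _
      _ = _ := by
          rw [mul_pow, Real.sq_sqrt (by positivity), ← Real.exp_nat_mul]
          ring_nf
  rw [hsq, hsq]
  calc Real.sqrt (x i t ⬝ᵥ x i t)
      ≤ Real.sqrt ((κ * Real.exp (-(M / 4 * t))) ^ 2 * (x 0 0 ⬝ᵥ x 0 0)) :=
        Real.sqrt_le_sqrt hbound
    _ = _ := by rw [Real.sqrt_mul (sq_nonneg _), Real.sqrt_sq (by positivity)]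

end LyapunovCertificate

end LSS

theorem stmt_14 {D m p : ℕ} (sys : LSS D m p)
    (Q : (q : Fin D) → Matrix (Fin (sys.n q)) (Fin (sys.n q)) ℝ)
    (hQ : ∀ q, (Q q).PosDef)
    (Mc μ : ℝ) (hMc : 0 < Mc)
    (hLyap : ∀ q, (-((sys.A q)ᵀ * Q q + Q q * sys.A q + Mc • Q q)).PosDef)
    (hK : ∀ q1 q2, q1 ≠ q2 →
      (Q q1 - Real.exp (-(Mc * μ)) • ((sys.K q1 q2)ᵀ * Q q2 * sys.K q1 q2)).PosDef)
    (Sq : (q : Fin D) → Matrix (Fin (sys.n q)) (Fin (sys.n q)) ℝ)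
    (hSq : ∀ q, IsUnit (Sq q).det)
    (hdiag : ∀ q, (((Sq q)⁻¹)ᵀ * Q q * (Sq q)⁻¹).IsDiag)
    (r : Fin D → ℕ) (hr : ∀ q, r q ≤ sys.n q) :
    UnifExpStable
      (LSS.mk r
        (fun q => (Sq q * sys.A q * (Sq q)⁻¹).submatrix (Fin.castLE (hr q)) (Fin.castLE (hr q)))
        (fun q => (Sq q * sys.B q).submatrix (Fin.castLE (hr q)) id)
        (fun q => (sys.C q * (Sq q)⁻¹).submatrix id (Fin.castLE (hr q)))
        (fun q1 q2 => (Sq q2 * sys.K q1 q2 * (Sq q1)⁻¹).submatrix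
          (Fin.castLE (hr q2)) (Fin.castLE (hr q1))))
      (2 * μ) := by
  have hcert : sys.LyapunovCertificate Mc μ Q :=
    ⟨hQ, fun q => (hLyap q).posSemidef, fun q1 q2 hne => (hK q1 q2 hne).posSemidef⟩
  exact ((hcert.transform hSq).truncate hdiag r hr).unifExpStable hMc
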